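/- arXiv:2403.12394 — 6 statements merged into one kernel-verified Lean document; each statement's English description precedes it below -/
import Mathlib

section
/- On a finite hypergraph, the divergence operator div : H(E⃗) → L²(V) defined by div φ(v) = −(1/μ(v)) Σ_{e⃗∈E⃗ : v∈e⃗} (√ω_{e⃗}/(δ_{e⃗}!√(δ_{e⃗}−1))) φ(e⃗) + (1/μ(v)) Σ_{e⃗∈E⃗ : e⃗(1)=v} (δ_{e⃗}√ω_{e⃗}/(δ_{e⃗}!√(δ_{e⃗}−1))) φ(e⃗) satisfies the adjointness relation ⟨∇ψ, φ⟩_{E⃗} = ⟨ψ, −div φ⟩_V for all ψ : V → ℝ and φ : E⃗ → ℝ, and is the unique operator with this property. -/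
/-!
On a directed hyperedge `e⃗` ordering `e`, `∇ψ(e⃗) = √(ω_e/(δ−1)) (Σ_{u∈e⃗} ψ u − δ ψ(e⃗(1)))`.
Multiplying `div φ` by `μ ψ` and summing over vertices, the two sums of the divergence become
sums over directed hyperedges once the vertex sum is exchanged with the hyperedge sums: the
first collects `Σ_{u∈e⃗} ψ u` (the vertices of `e⃗` are distinct), the second `δ ψ(e⃗(1))`.
This is termwise `−⟨∇ψ, φ⟩`. Uniqueness follows by testing against indicator functions,
since `μ > 0`.
-/

/-- The hypergraph gradient on a directed hyperedge, encoded as a list of vertices: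
`∇φ(e⃗) = √(ω_{e⃗}/(δ_{e⃗}−1)) Σ_{u∈e⃗} (φ u − φ(e⃗(1)))`. -/
noncomputable def hGrad {V : Type*} [DecidableEq V] [Inhabited V] (ω : Finset V → ℝ)
    (φ : V → ℝ) (l : List V) : ℝ :=
  Real.sqrt (ω l.toFinset / ((l.length : ℝ) - 1)) *
    (l.map (fun u => φ u - φ l.headI)).sum

/-- The set of directed hyperedges arising from the hyperedge `e`: all orderings
(permutations) of the vertices of `e`. -/
noncomputable def dirEdges {V : Type*} [DecidableEq V] (e : Finset V) : Finset (List V) :=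
  e.toList.permutations.toFinset

/-- Inner product on functions on the symmetric directed hyperedge set:
`⟨F,G⟩_{E⃗} = Σ_{e⃗∈E⃗} (1/δ_{e⃗}!) F(e⃗) G(e⃗)`. -/
noncomputable def hInnerE {V : Type*} [DecidableEq V] (E : Finset (Finset V))
    (F G : List V → ℝ) : ℝ :=
  ∑ e ∈ E, ∑ l ∈ dirEdges e, (1 / (Nat.factorial l.length : ℝ)) * (F l * G l)

/-- The hypergraph divergence:
`div φ(v) = −(1/μ v) Σ_{e⃗∋v} (√ω/(δ!√(δ−1))) φ(e⃗) + (1/μ v) Σ_{e⃗(1)=v} (δ√ω/(δ!√(δ−1))) φ(e⃗)`. -/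
noncomputable def hDiv {V : Type*} [DecidableEq V] [Inhabited V]
    (E : Finset (Finset V)) (ω : Finset V → ℝ) (μ : V → ℝ)
    (φ : List V → ℝ) (v : V) : ℝ :=
  -(1 / μ v) * ∑ e ∈ E, ∑ l ∈ (dirEdges e).filter (fun l => v ∈ l),
      (Real.sqrt (ω e) / ((Nat.factorial l.length : ℝ) * Real.sqrt ((l.length : ℝ) - 1))) * φ l
  + (1 / μ v) * ∑ e ∈ E, ∑ l ∈ (dirEdges e).filter (fun l => l.headI = v),
      ((l.length : ℝ) * Real.sqrt (ω e) / ((Nat.factorial l.length : ℝ) * Real.sqrt ((l.length : ℝ) - 1))) * φ l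

open Finset

lemma List.sum_map_sub_const {α : Type*} (l : List α) (f : α → ℝ) (c : ℝ) :
    (l.map fun a => f a - c).sum = (l.map f).sum - l.length * c := by
  induction l with
  | nil => simp
  | cons a l ih => simp [ih]; ring

section Fibers

variable {α V : Type*} [Fintype V] [DecidableEq V]

lemma sum_mul_sum_filter_eq (s : Finset α) (g : α → V) (ψ : V → ℝ) (f : α → ℝ) :
    ∑ v, ψ v * ∑ a ∈ s with g a = v, f a = ∑ a ∈ s, ψ (g a) * f a := by
  rw [← sum_fiberwise s g (fun a => ψ (g a) * f a)]
  refine sum_congr rfl fun v _ => ?_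
  rw [mul_sum]
  exact sum_congr rfl fun a ha => by rw [(mem_filter.1 ha).2]

lemma sum_mul_sum_filter_mem (s : Finset (List V)) (hs : ∀ l ∈ s, l.Nodup)
    (ψ : V → ℝ) (f : List V → ℝ) :
    ∑ v, ψ v * ∑ l ∈ s with v ∈ l, f l = ∑ l ∈ s, (l.map ψ).sum * f l := by
  simp only [mul_sum, sum_filter]
  rw [sum_comm]
  refine sum_congr rfl fun l hl => ?_
  rw [← List.sum_toFinset ψ (hs l hl), sum_mul]
  simp only [mul_ite, mul_zero, ← sum_filter]
  exact sum_congr (by ext; simp) fun _ _ => rfl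

end Fibers

section DirEdges

variable {V : Type*} [DecidableEq V] {e : Finset V} {l : List V}

lemma perm_toList_of_mem_dirEdges (hl : l ∈ dirEdges e) : l.Perm e.toList :=
  List.mem_permutations.mp (List.mem_toFinset.mp hl)

lemma toFinset_eq_of_mem_dirEdges (hl : l ∈ dirEdges e) : l.toFinset = e := by
  ext x
  simp [(perm_toList_of_mem_dirEdges hl).mem_iff]

lemma nodup_of_mem_dirEdges (hl : l ∈ dirEdges e) : l.Nodup :=
  (perm_toList_of_mem_dirEdges hl).nodup_iff.mpr e.nodup_toList

end DirEdges

section Adjoint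

variable {V : Type*} [DecidableEq V] [Inhabited V]
  (E : Finset (Finset V)) (ω : Finset V → ℝ) (μ : V → ℝ)

noncomputable def divCoeff (e : Finset V) (l : List V) : ℝ :=
  Real.sqrt (ω e) / ((Nat.factorial l.length : ℝ) * Real.sqrt ((l.length : ℝ) - 1))

lemma hGrad_eq_of_mem_dirEdges (ψ : V → ℝ) {e : Finset V} (he : 0 ≤ ω e) {l : List V}
    (hl : l ∈ dirEdges e) :
    hGrad ω ψ l = Real.sqrt (ω e) / Real.sqrt ((l.length : ℝ) - 1) *
      ((l.map ψ).sum - l.length * ψ l.headI) := by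
  rw [hGrad, toFinset_eq_of_mem_dirEdges hl, Real.sqrt_div he, List.sum_map_sub_const]

lemma hInnerE_hGrad (hω : ∀ e ∈ E, 0 ≤ ω e) (ψ : V → ℝ) (φ : List V → ℝ) :
    hInnerE E (hGrad ω ψ) φ = ∑ e ∈ E, ∑ l ∈ dirEdges e,
      ((l.map ψ).sum - l.length * ψ l.headI) * (divCoeff ω e l * φ l) := by
  refine sum_congr rfl fun e he => sum_congr rfl fun l hl => ?_
  rw [hGrad_eq_of_mem_dirEdges ω ψ (hω e he) hl, divCoeff]
  ring

lemma sum_mul_hDiv [Fintype V] (hμ : ∀ v, μ v ≠ 0) (ψ : V → ℝ) (φ : List V → ℝ) :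
    ∑ v, μ v * (ψ v * hDiv E ω μ φ v) = ∑ e ∈ E, ∑ l ∈ dirEdges e,
      (l.length * ψ l.headI - (l.map ψ).sum) * (divCoeff ω e l * φ l) := by
  have hcancel : ∀ v, μ v * (ψ v * hDiv E ω μ φ v) =
      ∑ e ∈ E, ψ v * ∑ l ∈ dirEdges e with l.headI = v, l.length * (divCoeff ω e l * φ l)
        - ∑ e ∈ E, ψ v * ∑ l ∈ dirEdges e with v ∈ l, divCoeff ω e l * φ l := by
    intro v
    simp only [hDiv, divCoeff, ← mul_sum, mul_div_assoc, mul_assoc]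
    field_simp [hμ v]
    ring
  simp only [hcancel, sum_sub_distrib]
  rw [sum_comm, sum_comm (s := univ)]
  simp only [sum_mul_sum_filter_eq, sum_mul_sum_filter_mem _ (fun _ => nodup_of_mem_dirEdges),
    ← sum_sub_distrib]
  exact sum_congr rfl fun e _ => sum_congr rfl fun l _ => by ring

end Adjoint

lemma eq_of_forall_sum_mul_eq {V : Type*} [Fintype V] [DecidableEq V] {μ f g : V → ℝ}
    (hμ : ∀ v, μ v ≠ 0) (h : ∀ ψ : V → ℝ, ∑ v, μ v * (ψ v * f v) = ∑ v, μ v * (ψ v * g v)) :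
    f = g := by
  funext v
  simpa [Pi.single_apply, hμ v] using h (Pi.single v 1)

theorem stmt_1_general {V : Type*} [Fintype V] [DecidableEq V] [Inhabited V]
    (E : Finset (Finset V)) (ω : Finset V → ℝ) (μ : V → ℝ)
    (hω : ∀ e ∈ E, 0 < ω e) (hμ : ∀ v : V, 0 < μ v) :
    (∀ (ψ : V → ℝ) (φ : List V → ℝ),
        hInnerE E (hGrad ω ψ) φ = ∑ v, μ v * (ψ v * (-(hDiv E ω μ φ v)))) ∧
    (∀ D : (List V → ℝ) → V → ℝ,
        (∀ (ψ : V → ℝ) (φ : List V → ℝ),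
            hInnerE E (hGrad ω ψ) φ = ∑ v, μ v * (ψ v * (-(D φ v)))) →
        ∀ (φ : List V → ℝ) (v : V), D φ v = hDiv E ω μ φ v) := by
  have hμ0 : ∀ v, μ v ≠ 0 := fun v => (hμ v).ne'
  have adjoint : ∀ (ψ : V → ℝ) (φ : List V → ℝ),
      hInnerE E (hGrad ω ψ) φ = ∑ v, μ v * (ψ v * (-(hDiv E ω μ φ v))) := by
    intro ψ φ
    simp only [mul_neg, sum_neg_distrib, sum_mul_hDiv E ω μ hμ0,
      hInnerE_hGrad E ω (fun e he => (hω e he).le)]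
    rw [← sum_neg_distrib]
    refine sum_congr rfl fun e _ => ?_
    rw [← sum_neg_distrib]
    exact sum_congr rfl fun l _ => by ring
  refine ⟨adjoint, fun D hD φ v => ?_⟩
  have hneg := eq_of_forall_sum_mul_eq hμ0 fun ψ => (hD ψ φ).symm.trans (adjoint ψ φ)
  exact neg_injective (congrFun hneg v)

/-- the divergence satisfies the adjointness relation
`⟨∇ψ, φ⟩_{E⃗} = ⟨ψ, −div φ⟩_V` for all `ψ : V → ℝ`, `φ : E⃗ → ℝ`, and it is the
unique operator with this property. -/
theorem stmt_1 {V : Type*} [Fintype V] [DecidableEq V] [Inhabited V]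
    (E : Finset (Finset V)) (ω : Finset V → ℝ) (μ : V → ℝ)
    (hcard : ∀ e ∈ E, 2 ≤ e.card) (hω : ∀ e ∈ E, 0 < ω e) (hμ : ∀ v : V, 0 < μ v) :
    (∀ (ψ : V → ℝ) (φ : List V → ℝ),
        hInnerE E (hGrad ω ψ) φ = ∑ v, μ v * (ψ v * (-(hDiv E ω μ φ v)))) ∧
    (∀ D : (List V → ℝ) → V → ℝ,
        (∀ (ψ : V → ℝ) (φ : List V → ℝ),
            hInnerE E (hGrad ω ψ) φ = ∑ v, μ v * (ψ v * (-(D φ v)))) →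
        ∀ (φ : List V → ℝ) (v : V), D φ v = hDiv E ω μ φ v) :=
  stmt_1_general E ω μ hω hμ
end

section
/- (Integration by parts on hypergraphs) For any functions φ, ψ : V → ℝ on a finite hypergraph, Σ_{v∈V} μ(v) ∇φ(v)·∇ψ(v) = Σ_{v∈V} μ(v)(−Δφ(v))ψ(v), where ∇φ(v)·∇ψ(v) := (1/μ(v)) Σ_{e∋v} (ω_e/(δ_e(δ_e−1))) (Σ_{u∈e}(φ(u)−φ(v)))(Σ_{u∈e}(ψ(u)−ψ(v))) and Δφ(v) = (1/μ(v)) Σ_{e∋v} (ω_e/(δ_e−1)) Σ_{u∈e,u≠v}(φ(u)−φ(v)). -/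
/-!
Both sides are sums over pairs (v, e) with v ∈ e ∈ E, so it suffices to compare them edge by edge.
On a single edge e with d = δ_e, write Dφ(v) = Σ_{u∈e} (φ u − φ v); then Σ_{v∈e} Dφ(v) = 0 by
antisymmetry, and expanding Dψ(v) = Σ_{u∈e} ψ u − d ψ(v) gives
Σ_{v∈e} Dφ(v) Dψ(v) = −d Σ_{v∈e} Dφ(v) ψ(v). The factor d cancels the extra δ_e in the weight of
the gradient product.
-/

/-- Pointwise product of hypergraph gradients:
`∇φ(v)·∇ψ(v) = (1/μ v) Σ_{e∋v} (ω e/(δ_e(δ_e−1))) (Σ_{u∈e}(φu−φv)) (Σ_{u∈e}(ψu−ψv))`. -/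
noncomputable def hGradProd {V : Type*} [DecidableEq V] (E : Finset (Finset V)) (ω : Finset V → ℝ)
    (μ : V → ℝ) (φ ψ : V → ℝ) (v : V) : ℝ :=
  (1 / μ v) * ∑ e ∈ E.filter (fun e => v ∈ e),
    (ω e / ((e.card : ℝ) * ((e.card : ℝ) - 1))) *
      ((∑ u ∈ e, (φ u - φ v)) * (∑ u ∈ e, (ψ u - ψ v)))
/-- The hypergraph Laplacian:
`Δφ(v) = (1/μ v) Σ_{e∈E, v∈e} (ω e/(δ_e−1)) Σ_{u∈e, u≠v} (φ u − φ v)`. -/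
noncomputable def hLap {V : Type*} [DecidableEq V] (E : Finset (Finset V)) (ω : Finset V → ℝ)
    (μ : V → ℝ) (φ : V → ℝ) (v : V) : ℝ :=
  (1 / μ v) * ∑ e ∈ E.filter (fun e => v ∈ e),
    (ω e / ((e.card : ℝ) - 1)) * ∑ u ∈ e.erase v, (φ u - φ v)

open Finset

theorem Finset.sum_univ_sum_filter_mem {V M : Type*} [Fintype V] [DecidableEq V]
    [AddCommMonoid M] (E : Finset (Finset V)) (f : V → Finset V → M) :
    ∑ v, ∑ e ∈ E.filter (fun e => v ∈ e), f v e = ∑ e ∈ E, ∑ v ∈ e, f v e := by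
  simp only [sum_filter]
  rw [sum_comm]
  refine sum_congr rfl fun e _ => ?_
  rw [sum_ite_mem, univ_inter]

section EdgeSums

variable {α R : Type*} [CommRing R] (e : Finset α)

theorem Finset.sum_sub_const_eq (f : α → R) (v : α) :
    ∑ u ∈ e, (f u - f v) = ∑ u ∈ e, f u - #e * f v := by
  rw [sum_sub_distrib, sum_const, nsmul_eq_mul]

theorem Finset.sum_sum_sub_eq_zero (f : α → R) : ∑ v ∈ e, ∑ u ∈ e, (f u - f v) = 0 := by
  simp only [sum_sub_distrib]
  rw [sum_comm, sub_self]

theorem Finset.sum_mul_sum_sub_eq (φ ψ : α → R) :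
    ∑ v ∈ e, (∑ u ∈ e, (φ u - φ v)) * ∑ u ∈ e, (ψ u - ψ v)
      = -(#e * ∑ v ∈ e, (∑ u ∈ e, (φ u - φ v)) * ψ v) := by
  calc ∑ v ∈ e, (∑ u ∈ e, (φ u - φ v)) * ∑ u ∈ e, (ψ u - ψ v)
      = (∑ v ∈ e, ∑ u ∈ e, (φ u - φ v)) * ∑ u ∈ e, ψ u
          - #e * ∑ v ∈ e, (∑ u ∈ e, (φ u - φ v)) * ψ v := by
        rw [sum_mul, mul_sum, ← sum_sub_distrib]
        refine sum_congr rfl fun v _ => ?_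
        rw [sum_sub_const_eq e ψ]
        ring
    _ = -(#e * ∑ v ∈ e, (∑ u ∈ e, (φ u - φ v)) * ψ v) := by
        rw [sum_sum_sub_eq_zero, zero_mul, zero_sub]

end EdgeSums

theorem edge_sum_gradProd_eq_neg_lap {α K : Type*} [DecidableEq α] [Field K] [CharZero K]
    (e : Finset α) (c : K) (φ ψ : α → K) :
    ∑ v ∈ e, c / (#e * (#e - 1)) * ((∑ u ∈ e, (φ u - φ v)) * ∑ u ∈ e, (ψ u - ψ v))
      = ∑ v ∈ e, -(c / (#e - 1) * (∑ u ∈ e.erase v, (φ u - φ v)) * ψ v) := by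
  rcases e.eq_empty_or_nonempty with rfl | he
  · simp
  have hd : (#e : K) ≠ 0 := by exact_mod_cast he.card_pos.ne'
  have herase : ∀ v ∈ e, ∑ u ∈ e.erase v, (φ u - φ v) = ∑ u ∈ e, (φ u - φ v) :=
    fun v _ => sum_erase _ (sub_self _)
  calc ∑ v ∈ e, c / (#e * (#e - 1)) * ((∑ u ∈ e, (φ u - φ v)) * ∑ u ∈ e, (ψ u - ψ v))
      = c / (#e * (#e - 1)) * -(#e * ∑ v ∈ e, (∑ u ∈ e, (φ u - φ v)) * ψ v) := by
        rw [← mul_sum, sum_mul_sum_sub_eq]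
    _ = -(c / (#e - 1) * ∑ v ∈ e, (∑ u ∈ e, (φ u - φ v)) * ψ v) := by
        field_simp
    _ = ∑ v ∈ e, -(c / (#e - 1) * (∑ u ∈ e.erase v, (φ u - φ v)) * ψ v) := by
        rw [sum_neg_distrib, mul_sum]
        congr 1
        refine sum_congr rfl fun v hv => ?_
        rw [herase v hv, mul_assoc]

theorem stmt_3_general {V : Type*} [Fintype V] [DecidableEq V]
    (E : Finset (Finset V)) (ω : Finset V → ℝ) (μ : V → ℝ)
    (hμ : ∀ v : V, 0 < μ v)
    (φ ψ : V → ℝ) :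
    ∑ v, μ v * hGradProd E ω μ φ ψ v = ∑ v, μ v * ((-(hLap E ω μ φ v)) * ψ v) := by
  have hLHS : ∀ v, μ v * hGradProd E ω μ φ ψ v
      = ∑ e ∈ E.filter (fun e => v ∈ e), ω e / (#e * (#e - 1)) *
          ((∑ u ∈ e, (φ u - φ v)) * ∑ u ∈ e, (ψ u - ψ v)) := fun v => by
    rw [hGradProd, one_div, mul_inv_cancel_left₀ (hμ v).ne']
  have hRHS : ∀ v, μ v * ((-(hLap E ω μ φ v)) * ψ v)
      = ∑ e ∈ E.filter (fun e => v ∈ e),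
          -(ω e / (#e - 1) * (∑ u ∈ e.erase v, (φ u - φ v)) * ψ v) := fun v => by
    rw [hLap, one_div, neg_mul, mul_neg, ← mul_assoc, mul_inv_cancel_left₀ (hμ v).ne',
      sum_mul, ← sum_neg_distrib]
  simp only [hLHS, hRHS, sum_univ_sum_filter_mem, edge_sum_gradProd_eq_neg_lap]

/-- integration by parts:
`Σ_v μ(v) ∇φ(v)·∇ψ(v) = Σ_v μ(v) (−Δφ(v)) ψ(v)`. -/
theorem stmt_3 {V : Type*} [Fintype V] [DecidableEq V]
    (E : Finset (Finset V)) (ω : Finset V → ℝ) (μ : V → ℝ)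
    (hcard : ∀ e ∈ E, 2 ≤ e.card) (hω : ∀ e ∈ E, 0 < ω e) (hμ : ∀ v : V, 0 < μ v)
    (φ ψ : V → ℝ) :
    ∑ v, μ v * hGradProd E ω μ φ ψ v = ∑ v, μ v * ((-(hLap E ω μ φ v)) * ψ v) :=
  stmt_3_general E ω μ hμ φ ψ
end

section
/- (Weak maximum principle) Let H = (V, E) be a finite hypergraph and c : V → ℝ with c(v) > 0 for all v. If φ : V → ℝ satisfies −Δφ(v) + c(v)φ(v) ≥ 0 for all v ∈ V, then φ(v) ≥ 0 for all v ∈ V. -/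
theorem hLap_nonneg_of_forall_le {V : Type*} [DecidableEq V] {E : Finset (Finset V)}
    {ω : Finset V → ℝ} {μ : V → ℝ} {φ : V → ℝ} {v : V}
    (hω : ∀ e ∈ E, 0 ≤ ω e) (hμ : 0 ≤ μ v) (hmin : ∀ u, φ v ≤ φ u) :
    0 ≤ hLap E ω μ φ v := by
  refine mul_nonneg (one_div_nonneg.2 hμ) (Finset.sum_nonneg fun e he => ?_)
  obtain ⟨heE, hve⟩ := Finset.mem_filter.1 he
  have hcard : (1 : ℝ) ≤ e.card := Nat.one_le_cast.2 (Finset.card_pos.2 ⟨v, hve⟩)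
  exact mul_nonneg (div_nonneg (hω e heE) (sub_nonneg.2 hcard))
    (Finset.sum_nonneg fun u _ => sub_nonneg.2 (hmin u))

theorem stmt_5_general {V : Type*} [Fintype V] [DecidableEq V]
    (E : Finset (Finset V)) (ω : Finset V → ℝ) (μ : V → ℝ)
    (hω : ∀ e ∈ E, 0 < ω e) (hμ : ∀ v : V, 0 < μ v)
    (c : V → ℝ) (hc : ∀ v, 0 < c v)
    (φ : V → ℝ) (hφ : ∀ v, 0 ≤ -(hLap E ω μ φ v) + c v * φ v) :
    ∀ v, 0 ≤ φ v := by
  intro v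
  have : Nonempty V := ⟨v⟩
  obtain ⟨v₀, hmin⟩ := Finite.exists_min φ
  have hΔ : 0 ≤ hLap E ω μ φ v₀ :=
    hLap_nonneg_of_forall_le (fun e he => (hω e he).le) (hμ v₀).le hmin
  have hcφ : 0 ≤ c v₀ * φ v₀ := by linarith [hφ v₀]
  exact (nonneg_of_mul_nonneg_right hcφ (hc v₀)).trans (hmin v)

/-- weak maximum principle: if `c > 0` on `V` and
`−Δφ + cφ ≥ 0` on `V`, then `φ ≥ 0` on `V`. -/
theorem stmt_5 {V : Type*} [Fintype V] [DecidableEq V]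
    (E : Finset (Finset V)) (ω : Finset V → ℝ) (μ : V → ℝ)
    (hcard : ∀ e ∈ E, 2 ≤ e.card) (hω : ∀ e ∈ E, 0 < ω e) (hμ : ∀ v : V, 0 < μ v)
    (c : V → ℝ) (hc : ∀ v, 0 < c v)
    (φ : V → ℝ) (hφ : ∀ v, 0 ≤ -(hLap E ω μ φ v) + c v * φ v) :
    ∀ v, 0 ≤ φ v :=
  stmt_5_general E ω μ hω hμ c hc φ hφ
end

section
/- Let H = (V, E) be a connected finite hypergraph. If φ : V → ℝ satisfies −Δφ(v) ≥ 0 for all v ∈ V, then the negative part φ⁻ = min{φ, 0} is a constant function on V. -/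
/-- Connectedness of a hypergraph: any two distinct vertices are joined by a
hyperpath, i.e. a sequence of hyperedges with consecutive nonempty intersections. -/
def hConnected {V : Type*} [DecidableEq V] (E : Finset (Finset V)) : Prop :=
  ∀ u v : V, u ≠ v → ∃ γ : List (Finset V), ∃ hγ : γ ≠ [],
    (∀ e ∈ γ, e ∈ E) ∧ γ.Chain' (fun a b => (a ∩ b).Nonempty) ∧
    u ∈ γ.head hγ ∧ v ∈ γ.getLast hγ

section

variable {V : Type*} [DecidableEq V]

lemma eq_on_edge_of_hLap_nonpos_of_isMin {E : Finset (Finset V)} {ω : Finset V → ℝ}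
    {μ : V → ℝ} {φ : V → ℝ} {w : V} (hω : ∀ e ∈ E, 0 < ω e) (hμ : 0 < μ w)
    (hφ : hLap E ω μ φ w ≤ 0) (hmin : ∀ x, φ w ≤ φ x) {e : Finset V} (he : e ∈ E)
    (hwe : w ∈ e) : ∀ x ∈ e, φ x = φ w := by
  have hinner_nonneg : ∀ f : Finset V, ∀ u ∈ f.erase w, 0 ≤ φ u - φ w :=
    fun _ u _ ↦ sub_nonneg.2 (hmin u)
  have hterm_nonneg : ∀ f ∈ E.filter (fun f => w ∈ f),
      0 ≤ (ω f / ((f.card : ℝ) - 1)) * ∑ u ∈ f.erase w, (φ u - φ w) := by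
    intro f hf
    obtain ⟨hfE, hwf⟩ := Finset.mem_filter.1 hf
    have hcard : (1 : ℝ) ≤ f.card := by exact_mod_cast Finset.card_pos.2 ⟨w, hwf⟩
    exact mul_nonneg (div_nonneg (hω f hfE).le (sub_nonneg.2 hcard))
      (Finset.sum_nonneg (hinner_nonneg f))
  have hsum_nonpos := nonpos_of_mul_nonpos_right hφ (one_div_pos.2 hμ)
  have hterm_zero := (Finset.sum_eq_zero_iff_of_nonneg hterm_nonneg).1
    (hsum_nonpos.antisymm (Finset.sum_nonneg hterm_nonneg)) e (Finset.mem_filter.2 ⟨he, hwe⟩)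
  intro x hx
  obtain rfl | hxw := eq_or_ne x w
  · rfl
  have hcard : (1 : ℝ) < e.card := by exact_mod_cast Finset.one_lt_card.2 ⟨x, hx, w, hwe, hxw⟩
  have hcoef : ω e / ((e.card : ℝ) - 1) ≠ 0 := (div_pos (hω e he) (sub_pos.2 hcard)).ne'
  have hinner_zero := (Finset.sum_eq_zero_iff_of_nonneg (hinner_nonneg e)).1
    ((mul_eq_zero.1 hterm_zero).resolve_left hcoef) x (Finset.mem_erase.2 ⟨hxw, hx⟩)
  exact sub_eq_zero.1 hinner_zero

lemma forall_mem_of_chain_of_edgeClosed {E : Finset (Finset V)} {P : V → Prop}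
    (hP : ∀ e ∈ E, ∀ w ∈ e, P w → ∀ x ∈ e, P x) :
    ∀ (γ : List (Finset V)) (e : Finset V), (∀ f ∈ e :: γ, f ∈ E) →
      (e :: γ).IsChain (fun a b => (a ∩ b).Nonempty) → (∃ w ∈ e, P w) →
      ∀ f ∈ e :: γ, ∀ x ∈ f, P x := by
  intro γ
  induction γ with
  | nil =>
    rintro e hE - ⟨w, hwe, hw⟩ f hf
    rw [List.mem_singleton.1 hf]
    exact hP e (hE e List.mem_cons_self) w hwe hw
  | cons e' γ ih =>
    rintro e hE hchain ⟨w, hwe, hw⟩ f hf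
    have he : ∀ x ∈ e, P x := hP e (hE e List.mem_cons_self) w hwe hw
    obtain ⟨⟨w', hw'⟩, hchain'⟩ := List.isChain_cons_cons.1 hchain
    obtain ⟨hw'e, hw'e'⟩ := Finset.mem_inter.1 hw'
    rcases List.mem_cons.1 hf with rfl | hf
    · exact he
    · exact ih e' (fun g hg ↦ hE g (List.mem_cons_of_mem e hg)) hchain'
        ⟨w', hw'e', he w' hw'e⟩ f hf

lemma hConnected.of_edgeClosed {E : Finset (Finset V)} (hconn : hConnected E) {P : V → Prop}
    (hP : ∀ e ∈ E, ∀ w ∈ e, P w → ∀ x ∈ e, P x) {u v : V} (hu : P u) : P v := by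
  obtain rfl | huv := eq_or_ne u v
  · exact hu
  obtain ⟨_ | ⟨e, γ⟩, hγ, hE, hchain, hhead, hlast⟩ := hconn u v huv
  · exact absurd rfl hγ
  exact forall_mem_of_chain_of_edgeClosed hP γ e hE hchain ⟨u, hhead, hu⟩ _
    (List.getLast_mem hγ) v hlast

lemma hConnected.eq_of_hLap_nonpos [Fintype V] {E : Finset (Finset V)} {ω : Finset V → ℝ}
    {μ : V → ℝ} (hω : ∀ e ∈ E, 0 < ω e) (hμ : ∀ v, 0 < μ v) (hconn : hConnected E)
    {φ : V → ℝ} (hφ : ∀ v, hLap E ω μ φ v ≤ 0) (u v : V) : φ u = φ v := by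
  have : Nonempty V := ⟨u⟩
  obtain ⟨w, hw⟩ := Finite.exists_min φ
  have hmin : ∀ x, φ x = φ w := fun x ↦ hconn.of_edgeClosed (P := fun x ↦ φ x = φ w)
    (fun e he y hye hy x hx ↦ by
      have hymin : ∀ z, φ y ≤ φ z := hy ▸ hw
      rw [← hy]
      exact eq_on_edge_of_hLap_nonpos_of_isMin hω (hμ y) (hφ y) hymin he hye x hx) rfl
  rw [hmin u, hmin v]

end

theorem stmt_7_general {V : Type*} [Fintype V] [DecidableEq V]
    (E : Finset (Finset V)) (ω : Finset V → ℝ) (μ : V → ℝ)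
    (hω : ∀ e ∈ E, 0 < ω e) (hμ : ∀ v : V, 0 < μ v)
    (hconn : hConnected E)
    (φ : V → ℝ) (hφ : ∀ v, 0 ≤ -(hLap E ω μ φ v)) :
    ∀ u v : V, min (φ u) 0 = min (φ v) 0 := by
  intro u v
  rw [hconn.eq_of_hLap_nonpos hω hμ (fun v ↦ neg_nonneg.1 (hφ v)) u v]

/-- on a connected finite hypergraph, if `−Δφ ≥ 0` everywhere then the
negative part `φ⁻ = min{φ, 0}` is a constant function on `V`. -/
theorem stmt_7 {V : Type*} [Fintype V] [DecidableEq V]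
    (E : Finset (Finset V)) (ω : Finset V → ℝ) (μ : V → ℝ)
    (hcard : ∀ e ∈ E, 2 ≤ e.card) (hω : ∀ e ∈ E, 0 < ω e) (hμ : ∀ v : V, 0 < μ v)
    (hconn : hConnected E)
    (φ : V → ℝ) (hφ : ∀ v, 0 ≤ -(hLap E ω μ φ v)) :
    ∀ u v : V, min (φ u) 0 = min (φ v) 0 :=
  stmt_7_general E ω μ hω hμ hconn φ hφ
end

section
/- (Strong maximum principle) Let H = (V, E) be a connected finite hypergraph and c : V → ℝ with c(v) ≥ 0 for all v. Suppose φ : V → ℝ satisfies φ ≥ 0 on V and −Δφ(v) + c(v)φ(v) ≥ 0 for all v ∈ V. If φ(v₀) = 0 for some v₀ ∈ V, then φ ≡ 0 on V. -/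
theorem hConnected.forall_of_closed_on_edges {V : Type*} [DecidableEq V] {E : Finset (Finset V)}
    (hconn : hConnected E) {P : V → Prop} (hP : ∀ e ∈ E, ∀ v ∈ e, P v → ∀ u ∈ e, P u)
    {v₀ : V} (h₀ : P v₀) (v : V) : P v := by
  rcases eq_or_ne v₀ v with rfl | hne
  · exact h₀
  obtain ⟨γ, hγ, hγE, hchain, hv₀, hv⟩ := hconn v₀ v hne
  have hchainE : γ.IsChain fun a b => (a ∩ b).Nonempty ∧ b ∈ E :=
    hchain.imp_of_mem_imp fun _ b _ hb hab => ⟨hab, hγE b hb⟩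
  refine hchainE.induction (fun e => ∀ u ∈ e, P u) γ ?_ ?_ _ (List.getLast_mem hγ) v hv
  · rintro a b ⟨⟨x, hx⟩, hb⟩ ha
    rw [Finset.mem_inter] at hx
    exact hP b hb x hx.2 (ha x hx.1)
  · intro _
    exact hP _ (hγE _ (List.head_mem hγ)) v₀ hv₀ h₀

theorem eq_on_edge_of_isMin_of_hLap_nonpos {V : Type*} [DecidableEq V]
    {E : Finset (Finset V)} {ω : Finset V → ℝ} {μ : V → ℝ} {φ : V → ℝ} {v : V}
    (hcard : ∀ e ∈ E, 2 ≤ e.card) (hω : ∀ e ∈ E, 0 < ω e) (hμ : 0 < μ v)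
    (hmin : ∀ u, φ v ≤ φ u) (hΔ : hLap E ω μ φ v ≤ 0)
    {e : Finset V} (he : e ∈ E) (hve : v ∈ e) : ∀ u ∈ e, φ u = φ v := by
  have hcoef : ∀ f ∈ E, 0 < ω f / ((f.card : ℝ) - 1) := fun f hf => by
    have : (2 : ℝ) ≤ f.card := by exact_mod_cast hcard f hf
    exact div_pos (hω f hf) (by linarith)
  have hdiff : ∀ f : Finset V, ∀ u ∈ f.erase v, 0 ≤ φ u - φ v :=
    fun _ u _ => sub_nonneg.2 (hmin u)
  have hterm : ∀ f ∈ E.filter (v ∈ ·),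
      0 ≤ ω f / ((f.card : ℝ) - 1) * ∑ u ∈ f.erase v, (φ u - φ v) := fun f hf =>
    mul_nonneg (hcoef f (Finset.mem_filter.1 hf).1).le (Finset.sum_nonneg (hdiff f))
  have hsum : ∑ f ∈ E.filter (v ∈ ·),
      ω f / ((f.card : ℝ) - 1) * ∑ u ∈ f.erase v, (φ u - φ v) = 0 := by
    refine le_antisymm ?_ (Finset.sum_nonneg hterm)
    exact nonpos_of_mul_nonpos_right hΔ (by positivity)
  have hedge := (Finset.sum_eq_zero_iff_of_nonneg hterm).1 hsum e (Finset.mem_filter.2 ⟨he, hve⟩)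
  have hedge' := (mul_eq_zero.1 hedge).resolve_left (hcoef e he).ne'
  intro u hu
  rcases eq_or_ne u v with rfl | huv
  · rfl
  · exact sub_eq_zero.1 <|
      (Finset.sum_eq_zero_iff_of_nonneg (hdiff e)).1 hedge' u (Finset.mem_erase.2 ⟨huv, hu⟩)

theorem stmt_9_general {V : Type*} [DecidableEq V]
    (E : Finset (Finset V)) (ω : Finset V → ℝ) (μ : V → ℝ)
    (hcard : ∀ e ∈ E, 2 ≤ e.card) (hω : ∀ e ∈ E, 0 < ω e) (hμ : ∀ v : V, 0 < μ v)
    (hconn : hConnected E)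
    (c : V → ℝ)
    (φ : V → ℝ) (hpos : ∀ v, 0 ≤ φ v)
    (hφ : ∀ v, 0 ≤ -(hLap E ω μ φ v) + c v * φ v)
    (v₀ : V) (hv₀ : φ v₀ = 0) :
    ∀ v, φ v = 0 := by
  refine hconn.forall_of_closed_on_edges (P := (φ · = 0)) ?_ hv₀
  intro e he v hve hv u hu
  have hΔ : hLap E ω μ φ v ≤ 0 := by simpa [hv] using hφ v
  have hmin : ∀ u, φ v ≤ φ u := fun u => hv ▸ hpos u
  rw [eq_on_edge_of_isMin_of_hLap_nonpos hcard hω (hμ v) hmin hΔ he hve u hu, hv]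

/-- strong maximum principle: on a connected finite hypergraph, if
`c ≥ 0`, `φ ≥ 0`, `−Δφ + cφ ≥ 0` on `V`, and `φ(v₀) = 0` for some `v₀`, then `φ ≡ 0`. -/
theorem stmt_9 {V : Type*} [Fintype V] [DecidableEq V]
    (E : Finset (Finset V)) (ω : Finset V → ℝ) (μ : V → ℝ)
    (hcard : ∀ e ∈ E, 2 ≤ e.card) (hω : ∀ e ∈ E, 0 < ω e) (hμ : ∀ v : V, 0 < μ v)
    (hconn : hConnected E)
    (c : V → ℝ) (hc : ∀ v, 0 ≤ c v)
    (φ : V → ℝ) (hpos : ∀ v, 0 ≤ φ v)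
    (hφ : ∀ v, 0 ≤ -(hLap E ω μ φ v) + c v * φ v)
    (v₀ : V) (hv₀ : φ v₀ = 0) :
    ∀ v, φ v = 0 :=
  stmt_9_general E ω μ hcard hω hμ hconn c φ hpos hφ v₀ hv₀
end

section
/- (Existence for the Dirichlet problem) Let H = (V, E) be a connected finite hypergraph and Ω ⊊ V nonempty with nonempty complement. For any f : Ω → ℝ, there exists a function φ : V → ℝ with φ = 0 on Ω^c and −Δφ(v) = f(v) for all v ∈ Ω. -/
/-! The Dirichlet problem is a square linear system: the operator that applies the unnormalised
Laplacian `L` on `Ω` and the identity off `Ω` is an endomorphism of `V → ℝ`, so it suffices to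
show that it is injective. A function `φ` in its kernel vanishes off `Ω` and has `Lφ = 0`
on `Ω`, so `∑ φ · Lφ = 0`; by the Green identity
`2 ∑ᵥ φ v · Lφ v = -∑ₑ cₑ ∑_{u,v ∈ e} (φ u - φ v)²` with positive weights `cₑ`, `φ` is
constant on every hyperedge, hence constant by connectedness, hence zero since `Ωᶜ ≠ ∅`. -/

open Finset

theorem two_mul_sum_mul_sum_sub {V : Type*} (s : Finset V) (φ : V → ℝ) :
    2 * ∑ v ∈ s, φ v * ∑ u ∈ s, (φ u - φ v)
      = -∑ v ∈ s, ∑ u ∈ s, (φ u - φ v) ^ 2 := by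
  have hswap : ∑ v ∈ s, φ v * ∑ u ∈ s, (φ u - φ v)
      = ∑ v ∈ s, ∑ u ∈ s, φ u * (φ v - φ u) := by
    simp only [mul_sum]
    exact sum_comm
  rw [two_mul]
  nth_rw 2 [hswap]
  simp only [mul_sum, ← sum_add_distrib, ← sum_neg_distrib]
  exact sum_congr rfl fun v _ => sum_congr rfl fun u _ => by ring

section

variable {V : Type*} [DecidableEq V]

theorem eq_of_isChain_inter_nonempty {φ : V → ℝ} :
    ∀ {γ : List (Finset V)} (hγ : γ ≠ []),
      (∀ e ∈ γ, ∀ u ∈ e, ∀ v ∈ e, φ u = φ v) →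
      γ.IsChain (fun a b => (a ∩ b).Nonempty) →
      ∀ {x y : V}, x ∈ γ.head hγ → y ∈ γ.getLast hγ → φ x = φ y
  | [e], _, hφ, _, _, _, hx, hy => hφ e (by simp) _ hx _ hy
  | e :: e' :: γ, _, hφ, hchain, _, _, hx, hy => by
    obtain ⟨hmeet, hchain'⟩ := List.isChain_cons_cons.mp hchain
    obtain ⟨z, hz⟩ := hmeet
    rw [List.getLast_cons (List.cons_ne_nil _ _)] at hy
    calc φ _ = φ z := hφ e (by simp) _ hx z (mem_inter.mp hz).1
      _ = φ _ := eq_of_isChain_inter_nonempty (List.cons_ne_nil _ _)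
          (fun a ha => hφ a (List.mem_cons_of_mem _ ha)) hchain' (mem_inter.mp hz).2 hy

theorem hConnected.eq_of_forall_mem_edge {E : Finset (Finset V)} (hconn : hConnected E)
    {φ : V → ℝ} (hφ : ∀ e ∈ E, ∀ u ∈ e, ∀ v ∈ e, φ u = φ v) (u v : V) :
    φ u = φ v := by
  rcases eq_or_ne u v with rfl | huv
  · rfl
  obtain ⟨γ, hγ, hE, hchain, hu, hv⟩ := hconn u v huv
  exact eq_of_isChain_inter_nonempty hγ (fun e he => hφ e (hE e he)) hchain hu hv

noncomputable def edgeLaplacian (E : Finset (Finset V)) (c : Finset V → ℝ) :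
    (V → ℝ) →ₗ[ℝ] (V → ℝ) where
  toFun φ v := ∑ e ∈ E with v ∈ e, c e * ∑ u ∈ e, (φ u - φ v)
  map_add' φ ψ := by
    funext v
    simp only [Pi.add_apply, ← sum_add_distrib, ← mul_add]
    exact sum_congr rfl fun e _ => congrArg _ (sum_congr rfl fun u _ => by ring)
  map_smul' r φ := by
    funext v
    simp only [Pi.smul_apply, smul_eq_mul, RingHom.id_apply, mul_sum]
    exact sum_congr rfl fun e _ => sum_congr rfl fun u _ => by ring

theorem edgeLaplacian_apply (E : Finset (Finset V)) (c : Finset V → ℝ) (φ : V → ℝ)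
    (v : V) :
    edgeLaplacian E c φ v = ∑ e ∈ E with v ∈ e, c e * ∑ u ∈ e, (φ u - φ v) :=
  rfl

theorem hLap_eq_inv_mul_edgeLaplacian (E : Finset (Finset V)) (ω : Finset V → ℝ)
    (μ : V → ℝ) (φ : V → ℝ) (v : V) :
    hLap E ω μ φ v
      = (μ v)⁻¹ * edgeLaplacian E (fun e => ω e / ((e.card : ℝ) - 1)) φ v := by
  rw [hLap, one_div, edgeLaplacian_apply]
  congr 1
  exact sum_congr rfl fun e _ => congrArg _ (sum_erase _ (sub_self _))

theorem sum_mul_edgeLaplacian [Fintype V] (E : Finset (Finset V)) (c : Finset V → ℝ)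
    (φ : V → ℝ) :
    ∑ v, φ v * edgeLaplacian E c φ v
      = ∑ e ∈ E, c e * ∑ v ∈ e, φ v * ∑ u ∈ e, (φ u - φ v) := by
  simp only [edgeLaplacian_apply, mul_sum, sum_filter, mul_ite, mul_zero]
  rw [sum_comm]
  refine sum_congr rfl fun e _ => ?_
  rw [sum_ite_mem, univ_inter]
  exact sum_congr rfl fun v _ => sum_congr rfl fun u _ => by ring

theorem two_mul_sum_mul_edgeLaplacian [Fintype V] (E : Finset (Finset V)) (c : Finset V → ℝ)
    (φ : V → ℝ) :
    2 * ∑ v, φ v * edgeLaplacian E c φ v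
      = -∑ e ∈ E, c e * ∑ v ∈ e, ∑ u ∈ e, (φ u - φ v) ^ 2 := by
  rw [sum_mul_edgeLaplacian, mul_sum, ← sum_neg_distrib]
  exact sum_congr rfl fun e _ => by rw [mul_left_comm, two_mul_sum_mul_sum_sub, mul_neg]

theorem eq_of_mem_edge_of_sum_mul_edgeLaplacian_eq_zero [Fintype V] {E : Finset (Finset V)}
    {c : Finset V → ℝ} (hc : ∀ e ∈ E, 0 < c e) {φ : V → ℝ}
    (h : ∑ v, φ v * edgeLaplacian E c φ v = 0) :
    ∀ e ∈ E, ∀ u ∈ e, ∀ v ∈ e, φ u = φ v := by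
  intro e he u hu v hv
  have hnonneg : ∀ e ∈ E, 0 ≤ c e * ∑ v ∈ e, ∑ u ∈ e, (φ u - φ v) ^ 2 :=
    fun e he => mul_nonneg (hc e he).le (by positivity)
  have htotal : ∑ e ∈ E, c e * ∑ v ∈ e, ∑ u ∈ e, (φ u - φ v) ^ 2 = 0 := by
    linarith [two_mul_sum_mul_edgeLaplacian E c φ]
  have hedge : ∑ v ∈ e, ∑ u ∈ e, (φ u - φ v) ^ 2 = 0 :=
    (mul_eq_zero.mp ((sum_eq_zero_iff_of_nonneg hnonneg).mp htotal e he)).resolve_left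
      (hc e he).ne'
  have hsq : (φ u - φ v) ^ 2 = 0 :=
    (sum_eq_zero_iff_of_nonneg fun _ _ => sq_nonneg _).mp
      ((sum_eq_zero_iff_of_nonneg fun _ _ => by positivity).mp hedge v hv) u hu
  exact sub_eq_zero.mp (pow_eq_zero_iff two_ne_zero |>.mp hsq)

noncomputable def dirichletOperator (L : (V → ℝ) →ₗ[ℝ] (V → ℝ)) (Ω : Finset V) :
    (V → ℝ) →ₗ[ℝ] (V → ℝ) where
  toFun φ := Ω.piecewise (L φ) φ
  map_add' φ ψ := by
    funext v
    by_cases hv : v ∈ Ω <;> simp [hv]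
  map_smul' r φ := by
    funext v
    by_cases hv : v ∈ Ω <;> simp [hv]

theorem dirichletOperator_apply_of_mem (L : (V → ℝ) →ₗ[ℝ] (V → ℝ)) {Ω : Finset V}
    (φ : V → ℝ) {v : V} (hv : v ∈ Ω) : dirichletOperator L Ω φ v = L φ v :=
  piecewise_eq_of_mem _ _ _ hv

theorem dirichletOperator_apply_of_notMem (L : (V → ℝ) →ₗ[ℝ] (V → ℝ)) {Ω : Finset V}
    (φ : V → ℝ) {v : V} (hv : v ∉ Ω) : dirichletOperator L Ω φ v = φ v :=
  piecewise_eq_of_notMem _ _ _ hv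

theorem dirichletOperator_edgeLaplacian_injective [Fintype V] {E : Finset (Finset V)}
    {c : Finset V → ℝ} (hc : ∀ e ∈ E, 0 < c e) (hconn : hConnected E) {Ω : Finset V}
    (hΩc : Ωᶜ.Nonempty) : Function.Injective (dirichletOperator (edgeLaplacian E c) Ω) := by
  rw [← LinearMap.ker_eq_bot, LinearMap.ker_eq_bot']
  intro φ hφ
  have hout : ∀ v ∉ Ω, φ v = 0 := fun v hv => by
    rw [← dirichletOperator_apply_of_notMem (edgeLaplacian E c) φ hv, hφ, Pi.zero_apply]
  have hin : ∀ v ∈ Ω, edgeLaplacian E c φ v = 0 := fun v hv => by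
    rw [← dirichletOperator_apply_of_mem (edgeLaplacian E c) φ hv, hφ, Pi.zero_apply]
  have henergy : ∑ v, φ v * edgeLaplacian E c φ v = 0 := sum_eq_zero fun v _ => by
    by_cases hv : v ∈ Ω
    · rw [hin v hv, mul_zero]
    · rw [hout v hv, zero_mul]
  have hconst := hConnected.eq_of_forall_mem_edge hconn
    (eq_of_mem_edge_of_sum_mul_edgeLaplacian_eq_zero hc henergy)
  obtain ⟨w, hw⟩ := hΩc
  funext v
  rw [hconst v w, hout w (mem_compl.mp hw), Pi.zero_apply]

end

theorem stmt_14_general {V : Type*} [Fintype V] [DecidableEq V]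
    (E : Finset (Finset V)) (ω : Finset V → ℝ) (μ : V → ℝ)
    (hcard : ∀ e ∈ E, 2 ≤ e.card) (hω : ∀ e ∈ E, 0 < ω e) (hμ : ∀ v : V, 0 < μ v)
    (hconn : hConnected E)
    (Ω : Finset V) (hΩc : Ωᶜ.Nonempty)
    (f : V → ℝ) :
    ∃ φ : V → ℝ, (∀ v ∉ Ω, φ v = 0) ∧ ∀ v ∈ Ω, -(hLap E ω μ φ v) = f v := by
  set L := edgeLaplacian E fun e => ω e / ((e.card : ℝ) - 1)
  have hc : ∀ e ∈ E, 0 < ω e / ((e.card : ℝ) - 1) := fun e he => by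
    have : (2 : ℝ) ≤ e.card := by exact_mod_cast hcard e he
    exact div_pos (hω e he) (by linarith)
  obtain ⟨φ, hφ⟩ := LinearMap.injective_iff_surjective.mp
    (dirichletOperator_edgeLaplacian_injective hc hconn hΩc)
    (Ω.piecewise (fun v => -(μ v * f v)) 0)
  refine ⟨φ, fun v hv => ?_, fun v hv => ?_⟩
  · rw [← dirichletOperator_apply_of_notMem L φ hv, hφ, piecewise_eq_of_notMem _ _ _ hv,
      Pi.zero_apply]
  · have hLφ : L φ v = -(μ v * f v) := by
      rw [← dirichletOperator_apply_of_mem L φ hv, hφ, piecewise_eq_of_mem _ _ _ hv]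
    rw [hLap_eq_inv_mul_edgeLaplacian, hLφ, mul_neg, neg_neg, inv_mul_cancel_left₀ (hμ v).ne']

/-- existence for the Dirichlet problem: for any `f` there exists
`φ : V → ℝ` with `φ = 0` on `Ωᶜ` and `−Δφ = f` on `Ω`. -/
theorem stmt_14 {V : Type*} [Fintype V] [DecidableEq V]
    (E : Finset (Finset V)) (ω : Finset V → ℝ) (μ : V → ℝ)
    (hcard : ∀ e ∈ E, 2 ≤ e.card) (hω : ∀ e ∈ E, 0 < ω e) (hμ : ∀ v : V, 0 < μ v)
    (hconn : hConnected E)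
    (Ω : Finset V) (hΩ : Ω.Nonempty) (hΩc : Ωᶜ.Nonempty)
    (f : V → ℝ) :
    ∃ φ : V → ℝ, (∀ v ∉ Ω, φ v = 0) ∧ ∀ v ∈ Ω, -(hLap E ω μ φ v) = f v :=
  stmt_14_general E ω μ hcard hω hμ hconn Ω hΩc f
end
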